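/- arXiv:2602.16207 — 5 statements merged into one kernel-verified Lean document; each statement's English description precedes it below -/
import Mathlib

section
/- Let c = (c_1, …, c_n) ∈ 𝔽_q^n. Then c belongs to the multi-twisted Goppa code Γ(L, g, 𝕥, 𝕙, η) if and only if the following t linear equations over 𝔽_{q^m} hold: for every l ∈ {0, 1, …, t−1} with l ∉ {h_1, …, h_ℓ}, Σ_{i=1}^n c_i α_i^l g(α_i)^{−1} = 0, and for every j ∈ {1, …, ℓ}, Σ_{i=1}^n c_i (α_i^{h_j} + η_j α_i^{t−1+t_j}) g(α_i)^{−1} = 0. -/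
/-!
In `F[z]/⟨g⟩` the inverse of `z - a` is `-g(a)⁻¹ · g/(z - a)`, and
`g/(z - a) = Σ_{m<t} a^m g⟨m⟩`. So the defining sum of the code is the class of
`-Σ_{m<t} s_m g⟨m⟩`, where `s_m` is the left-hand side of the `m`-th parity-check equation
(the twist `η_j` enters exactly at `m = h_j`). This polynomial has degree `< t`, so it vanishes
modulo `g` only if it is zero; and `g⟨m⟩` has degree `t - 1 - m` with leading coefficient `g_t`,
so the `g⟨m⟩` are linearly independent and every `s_m` must vanish.
-/

open Polynomial

attribute [local instance] Classical.propDecidable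

/-- The multi-twisted Goppa code `Γ(L, g, 𝕥, 𝕙, η)`: the set of vectors
`c ∈ 𝔽_q^n` (entries in the subfield `K`) such that
`Σ_i c_i ((z - α_i)⁻¹ - Σ_j (η_j α_i^(t-1+t_j) / g(α_i)) · g⟨h_j⟩(z)) = 0`
in the quotient ring `F[z]/⟨g⟩`, where `g⟨h⟩ = g /ₘ X^(h+1)` is the polynomial
quotient of `g` by `z^(h+1)` and the inverse of `z - α_i` is taken in the
quotient ring (via `Ring.inverse`). Here `ℓ = L + 1 ≥ 1` twists. -/
noncomputable def MTGoppa {F : Type*} [Field F] (K : Subfield F) {n : ℕ}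
    (α : Fin n → F) (g : F[X]) (t : ℕ) {L : ℕ} (tw hk : Fin (L + 1) → ℕ)
    (η : Fin (L + 1) → F) : Set (Fin n → F) :=
  {c | (∀ i, c i ∈ K) ∧
    ∑ i, (Ideal.Quotient.mk (Ideal.span {g})) (C (c i)) *
      (Ring.inverse ((Ideal.Quotient.mk (Ideal.span {g})) (X - C (α i))) -
        (Ideal.Quotient.mk (Ideal.span {g}))
          (∑ j, C (η j * α i ^ (t - 1 + tw j) / g.eval (α i)) *
            (g /ₘ X ^ (hk j + 1)))) = 0}

open Finset

namespace Polynomial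

variable {R : Type*} [CommRing R]

theorem coeff_divByMonic_X_pow (p : R[X]) (k n : ℕ) :
    (p /ₘ X ^ k).coeff n = p.coeff (n + k) := by
  nontriviality R
  conv_rhs => rw [← modByMonic_add_div p (X ^ k)]
  rw [coeff_add, coeff_X_pow_mul, right_eq_add]
  refine coeff_eq_zero_of_degree_lt ((degree_modByMonic_lt p (monic_X_pow k)).trans_le ?_)
  rw [degree_X_pow]
  exact_mod_cast Nat.le_add_left k n

theorem divByMonic_X_sub_C_eq_sum (p : R[X]) (a : R) :
    p /ₘ (X - C a) = ∑ m ∈ range p.natDegree, a ^ m • (p /ₘ X ^ (m + 1)) := by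
  ext l
  simp only [coeff_divByMonic_X_sub_C, finsetSum_coeff, coeff_smul, coeff_divByMonic_X_pow,
    smul_eq_mul]
  rw [← Ico_add_one_right_eq_Icc, sum_Ico_eq_sum_range, Nat.add_sub_add_right]
  refine (sum_congr rfl fun m _ => ?_).trans
    (sum_subset (range_subset_range.2 (Nat.sub_le _ l)) fun m hm hm' => ?_)
  · congr 2 <;> omega
  · simp only [mem_range] at hm hm'
    rw [coeff_eq_zero_of_natDegree_lt (by omega), mul_zero]

theorem inverse_mk_X_sub_C (g : R[X]) {a : R} (ha : IsUnit (g.eval a)) :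
    Ring.inverse (Ideal.Quotient.mk (Ideal.span {g}) (X - C a)) =
      Ideal.Quotient.mk (Ideal.span {g}) (-C (Ring.inverse (g.eval a)) * (g /ₘ (X - C a))) := by
  set Q := Ideal.Quotient.mk (Ideal.span {g})
  have hg : Q g = 0 := Ideal.Quotient.eq_zero_iff_mem.mpr (Ideal.mem_span_singleton_self g)
  have h : Q (X - C a) * Q (-C (Ring.inverse (g.eval a)) * (g /ₘ (X - C a))) = 1 := by
    rw [← map_mul, mul_left_comm, X_sub_C_mul_divByMonic_eq_sub_modByMonic,
      modByMonic_X_sub_C_eq_C_eval]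
    simp [mul_sub, hg, ← C_mul, Ring.inverse_mul_cancel _ ha]
  simpa using (Ring.inverse_mul_eq_iff_eq_mul _ 1 _ (IsUnit.of_mul_eq_one _ h)).mpr h.symm

theorem sum_smul_divByMonic_X_pow_eq_zero_iff [NoZeroDivisors R] {g : R[X]} (hg : g ≠ 0)
    (v : ℕ → R) :
    ∑ m ∈ range g.natDegree, v m • (g /ₘ X ^ (m + 1)) = 0 ↔ ∀ m < g.natDegree, v m = 0 := by
  refine ⟨fun h m => ?_, fun h => sum_eq_zero fun m hm => by rw [h m (mem_range.1 hm), zero_smul]⟩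
  induction m using Nat.strong_induction_on with
  | _ m ih =>
    intro hm
    have hcoeff := congrArg (coeff · (g.natDegree - 1 - m)) h
    simp only [finsetSum_coeff, coeff_smul, coeff_divByMonic_X_pow, smul_eq_mul,
      coeff_zero] at hcoeff
    rw [sum_eq_single m (fun k hk hkm => ?_) (fun hm' => (hm' (mem_range.2 hm)).elim),
      show g.natDegree - 1 - m + (m + 1) = g.natDegree by omega] at hcoeff
    · exact (mul_eq_zero.1 hcoeff).resolve_right (leadingCoeff_ne_zero.2 hg)
    · rcases lt_or_gt_of_ne hkm with hlt | hgt
      · rw [ih k hlt (by omega), zero_mul]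
      · rw [coeff_eq_zero_of_natDegree_lt (by omega), mul_zero]

theorem mk_sum_smul_divByMonic_X_pow_eq_zero_iff [IsDomain R] {g : R[X]} (hg : g ≠ 0)
    (v : ℕ → R) :
    Ideal.Quotient.mk (Ideal.span {g}) (∑ m ∈ range g.natDegree, v m • (g /ₘ X ^ (m + 1))) = 0 ↔
      ∀ m < g.natDegree, v m = 0 := by
  have hdeg : degree (∑ m ∈ range g.natDegree, v m • (g /ₘ X ^ (m + 1))) < degree g := by
    refine (degree_sum_le _ _).trans_lt <|
      (Finset.sup_lt_iff (bot_lt_iff_ne_bot.2 (degree_ne_bot.2 hg))).2 fun m _ => ?_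
    have hX : 0 < degree (X ^ (m + 1) : R[X]) := by
      rw [degree_X_pow]
      exact_mod_cast m.succ_pos
    exact (degree_smul_le _ _).trans_lt (degree_divByMonic_lt g _ hg hX)
  rw [Ideal.Quotient.eq_zero_iff_mem, Ideal.mem_span_singleton,
    ← sum_smul_divByMonic_X_pow_eq_zero_iff hg]
  exact ⟨fun h => eq_zero_of_dvd_of_degree_lt h hdeg, fun h => h ▸ dvd_zero g⟩

end Polynomial

theorem Finset.sum_smul_comp_eq_sum_fiberwise {ι κ R M : Type*} [Fintype ι] [DecidableEq κ]
    [Semiring R] [AddCommMonoid M] [Module R M] {h : ι → κ} {s : Finset κ} (hs : ∀ j, h j ∈ s)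
    (f : ι → R) (G : κ → M) :
    ∑ j, f j • G (h j) = ∑ m ∈ s, (∑ j with h j = m, f j) • G m := by
  rw [← sum_fiberwise_of_maps_to fun j _ => hs j]
  refine sum_congr rfl fun m _ => ?_
  rw [sum_smul]
  exact sum_congr rfl fun j hj => by rw [(mem_filter.1 hj).2]

namespace MTGoppa

noncomputable def syndrome {F : Type*} [Field F] {n : ℕ} (α : Fin n → F) (g : F[X]) (t : ℕ)
    {L : ℕ} (tw hk : Fin (L + 1) → ℕ) (η : Fin (L + 1) → F) (c : Fin n → F) (m : ℕ) : F :=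
  ∑ i, c i * ((α i ^ m + ∑ j with hk j = m, η j * α i ^ (t - 1 + tw j)) / g.eval (α i))

variable {F : Type*} [Field F] {n : ℕ} {α : Fin n → F} {g : F[X]} {t : ℕ} {L : ℕ}
  {tw hk : Fin (L + 1) → ℕ} {η : Fin (L + 1) → F} {c : Fin n → F}

theorem mem_iff_mk_sum_syndrome_smul_eq_zero {K : Subfield F} (hc : ∀ i, c i ∈ K)
    (hgα : ∀ i, g.eval (α i) ≠ 0) (hhk : ∀ j, hk j < g.natDegree) :
    c ∈ MTGoppa K α g g.natDegree tw hk η ↔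
      Ideal.Quotient.mk (Ideal.span {g}) (∑ m ∈ range g.natDegree,
        syndrome α g g.natDegree tw hk η c m • (g /ₘ X ^ (m + 1))) = 0 := by
  set Q := Ideal.Quotient.mk (Ideal.span {g})
  have hterm : ∀ i, Q (C (c i)) * (Ring.inverse (Q (X - C (α i))) -
      Q (∑ j, C (η j * α i ^ (g.natDegree - 1 + tw j) / g.eval (α i)) * (g /ₘ X ^ (hk j + 1)))) =
      Q (-∑ m ∈ range g.natDegree,
        (c i * ((α i ^ m + ∑ j with hk j = m, η j * α i ^ (g.natDegree - 1 + tw j)) /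
          g.eval (α i))) • (g /ₘ X ^ (m + 1))) := by
    intro i
    rw [inverse_mk_X_sub_C g (hgα i).isUnit, Ring.inverse_eq_inv, ← map_sub, ← map_mul]
    congr 1
    simp only [← smul_eq_C_mul, neg_mul]
    rw [divByMonic_X_sub_C_eq_sum,
      sum_smul_comp_eq_sum_fiberwise (G := fun m => g /ₘ X ^ (m + 1)) fun j => mem_range.2 (hhk j)]
    simp only [smul_sum, ← sum_neg_distrib, ← sum_sub_distrib]
    refine sum_congr rfl fun m _ => ?_
    rw [← sum_div]
    module
  rw [MTGoppa, Set.mem_ofPred_eq, and_iff_right hc, sum_congr rfl fun i _ => hterm i,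
    ← map_sum, sum_neg_distrib, map_neg, neg_eq_zero, sum_comm]
  simp only [← sum_smul, syndrome]

theorem syndrome_of_forall_ne {m : ℕ} (hm : ∀ j, hk j ≠ m) :
    syndrome α g t tw hk η c m = ∑ i, c i * α i ^ m / g.eval (α i) := by
  simp [syndrome, filter_false_of_mem fun j _ => hm j, mul_div_assoc]

theorem syndrome_apply_hk (hk_inj : Function.Injective hk) (j : Fin (L + 1)) :
    syndrome α g t tw hk η c (hk j) =
      ∑ i, c i * ((α i ^ hk j + η j * α i ^ (t - 1 + tw j)) / g.eval (α i)) := by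
  simp only [syndrome, hk_inj.eq_iff, filter_eq', mem_univ, if_true, sum_singleton]

end MTGoppa

theorem stmt0_general {F : Type*} [Field F] (K : Subfield F)
    {n : ℕ} (α : Fin n → F)
    (g : F[X]) (t : ℕ) (hgdeg : g.natDegree = t)
    (hgt : g.coeff t ≠ 0) (hgα : ∀ i, g.eval (α i) ≠ 0)
    {L : ℕ} (tw hk : Fin (L + 1) → ℕ)
    (hhkmono : StrictMono hk) (hhkt : ∀ j, hk j < t)
    (η : Fin (L + 1) → F)
    (c : Fin n → F) (hc : ∀ i, c i ∈ K) :
    c ∈ MTGoppa K α g t tw hk η ↔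
      ((∀ l : ℕ, l < t → (∀ j, hk j ≠ l) →
          ∑ i, c i * α i ^ l / g.eval (α i) = 0) ∧
        ∀ j, ∑ i, c i * ((α i ^ hk j + η j * α i ^ (t - 1 + tw j)) / g.eval (α i)) = 0) := by
  subst hgdeg
  have hg : g ≠ 0 := fun h => hgt (by simp [h])
  rw [MTGoppa.mem_iff_mk_sum_syndrome_smul_eq_zero hc hgα hhkt,
    mk_sum_smul_divByMonic_X_pow_eq_zero_iff hg]
  refine ⟨fun h => ⟨fun l hl hl' => ?_, fun j => ?_⟩, fun ⟨h₁, h₂⟩ m hm => ?_⟩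
  · exact (MTGoppa.syndrome_of_forall_ne hl').symm.trans (h l hl)
  · exact (MTGoppa.syndrome_apply_hk hhkmono.injective j).symm.trans (h _ (hhkt j))
  · by_cases hm' : ∃ j, hk j = m
    · obtain ⟨j, rfl⟩ := hm'
      exact (MTGoppa.syndrome_apply_hk hhkmono.injective j).trans (h₂ j)
    · have hne : ∀ j, hk j ≠ m := not_exists.1 hm'
      exact (MTGoppa.syndrome_of_forall_ne hne).trans (h₁ m hm hne)

/-- `c ∈ Γ(L, g, 𝕥, 𝕙, η)` iff the `t` parity-check equations hold:
for every `l < t` not a hook, `Σ_i c_i α_i^l g(α_i)⁻¹ = 0`, and for every hook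
index `j`, `Σ_i c_i (α_i^(h_j) + η_j α_i^(t-1+t_j)) g(α_i)⁻¹ = 0`. -/
theorem stmt0 {F : Type*} [Field F] [Fintype F] (K : Subfield F)
    {n : ℕ} (α : Fin n → F) (hα : Function.Injective α)
    (g : F[X]) (t : ℕ) (ht : 1 ≤ t) (hgdeg : g.natDegree = t)
    (hgt : g.coeff t ≠ 0) (hgα : ∀ i, g.eval (α i) ≠ 0)
    {L : ℕ} (tw hk : Fin (L + 1) → ℕ)
    (htw1 : ∀ j, 1 ≤ tw j) (htwmono : StrictMono tw)
    (hhkmono : StrictMono hk) (hhkt : ∀ j, hk j < t)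
    (η : Fin (L + 1) → F)
    (c : Fin n → F) (hc : ∀ i, c i ∈ K) :
    c ∈ MTGoppa K α g t tw hk η ↔
      ((∀ l : ℕ, l < t → (∀ j, hk j ≠ l) →
          ∑ i, c i * α i ^ l / g.eval (α i) = 0) ∧
        ∀ j, ∑ i, c i * ((α i ^ hk j + η j * α i ^ (t - 1 + tw j)) / g.eval (α i)) = 0) :=
  stmt0_general K α g t hgdeg hgt hgα tw hk hhkmono hhkt η c hc
end

section
/- With the error vector e of Hamming weight |J| ≤ t/2 and the polynomials σ(x), τ(x), s_π(x) ∈ 𝔽_{q^m}[x] as defined, the following hold: (i) s_π(x)·σ(x) ≡ τ(x) (mod x^t); (ii) gcd(σ(x), τ(x)) = 1; (iii) deg τ(x) ≤ deg σ(x) = |J| ≤ t/2. -/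
open Polynomial

attribute [local instance] Classical.propDecidable

variable {F : Type*} [Field F] {n : ℕ}

/-- The support `J` of an error vector `e`. -/
noncomputable def errSupp (e : Fin n → F) : Finset (Fin n) :=
  Finset.univ.filter fun i => e i ≠ 0

/-- The error-locator polynomial `σ(x) = Π_{i∈J} (x - α_i⁻¹)`. -/
noncomputable def errLoc (α e : Fin n → F) : F[X] :=
  ∏ i ∈ errSupp e, (X - C (α i)⁻¹)

/-- The scalar `A = η Σ_{i∈J} α_i^{t-1+t₁} g(α_i)⁻¹ e_i`. -/
noncomputable def twistScalar (α : Fin n → F) (g : F[X]) (t t₁ : ℕ) (η : F)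
    (e : Fin n → F) : F :=
  η * ∑ i ∈ errSupp e, α i ^ (t - 1 + t₁) * (g.eval (α i))⁻¹ * e i

/-- The error-evaluator polynomial
`τ(x) = A·σ(x) - Σ_{i∈J} α_i⁻¹ g(α_i)⁻¹ e_i Π_{j∈J∖{i}} (x - α_j⁻¹)`. -/
noncomputable def errEval (α : Fin n → F) (g : F[X]) (t t₁ : ℕ) (η : F)
    (e : Fin n → F) : F[X] :=
  C (twistScalar α g t t₁ η e) * errLoc α e -
    ∑ i ∈ errSupp e, C ((α i)⁻¹ * (g.eval (α i))⁻¹ * e i) *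
      ∏ j ∈ (errSupp e).erase i, (X - C (α j)⁻¹)

/-- The transformed syndrome polynomial
`s_π(x) = A + Σ_{i∈J} g(α_i)⁻¹ e_i Σ_{l=0}^{t-1} α_i^l x^l`. -/
noncomputable def synPoly (α : Fin n → F) (g : F[X]) (t t₁ : ℕ) (η : F)
    (e : Fin n → F) : F[X] :=
  C (twistScalar α g t t₁ η e) +
    ∑ i ∈ errSupp e, C ((g.eval (α i))⁻¹ * e i) *
      ∑ l ∈ Finset.range t, C (α i ^ l) * X ^ l

/-!
The error locator `σ` is the nodal polynomial of the points `α_i⁻¹`, `i ∈ J`. Splitting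
`σ = (x - α_i⁻¹) σ_i`, the difference `s_π σ - τ` is `Σ_i g(α_i)⁻¹ e_i σ_i` times
`(x - α_i⁻¹) Σ_{l<t} α_i^l x^l + α_i⁻¹ = α_i^{t-1} x^t`, a telescoping geometric sum. At a root
`α_k⁻¹` of `σ` only the `k`-th summand of `τ` survives, and it is nonzero because the `α_i⁻¹` are
distinct, so `σ` and `τ` share no root. The degree bounds hold because every summand of `τ` is a
multiple of `σ` or of some `σ_i`.
-/

namespace Polynomial

theorem X_pow_dvd_X_sub_C_inv_mul_geom_sum_add {K : Type*} [Field K] {a : K} (ha : a ≠ 0)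
    (t : ℕ) : X ^ t ∣ (X - C a⁻¹) * ∑ l ∈ Finset.range t, C (a ^ l) * X ^ l + C a⁻¹ := by
  have hunit : IsUnit (C a) := isUnit_C.mpr (IsUnit.mk0 a ha)
  rw [← hunit.dvd_mul_left]
  -- multiplying by `a` turns the left factor into `a X - 1` and the sum into `Σ (a X)^l`
  have hgeom : C a * ((X - C a⁻¹) * ∑ l ∈ Finset.range t, C (a ^ l) * X ^ l + C a⁻¹)
      = (C a * X) ^ t := by
    have hsum : ∑ l ∈ Finset.range t, C (a ^ l) * X ^ l
        = ∑ l ∈ Finset.range t, (C a * X) ^ l := by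
      simp only [mul_pow, C_pow]
    have hinv : C a * C a⁻¹ = 1 := by rw [← C_mul, mul_inv_cancel₀ ha, C_1]
    rw [hsum, mul_add, ← mul_assoc, mul_sub, hinv, mul_geom_sum, sub_add_cancel]
  rw [hgeom, mul_pow]
  exact dvd_mul_left _ _

end Polynomial

namespace Lagrange

theorem isCoprime_nodal_of_eval_ne_zero {ι K : Type*} [Field K] {v : ι → K} {s : Finset ι}
    {p : K[X]}
    (hp : ∀ i ∈ s, p.eval (v i) ≠ 0) : IsCoprime (nodal s v) p := by
  refine IsCoprime.prod_left fun i hi => ?_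
  rw [(irreducible_X_sub_C (v i)).coprime_iff_not_dvd, dvd_iff_isRoot]
  exact hp i hi

variable {R : Type*} [CommRing R] {ι : Type*} [DecidableEq ι] {s : Finset ι} {v : ι → R}

theorem eval_sum_C_mul_nodal_erase_at_node (c : ι → R) {k : ι} (hk : k ∈ s) :
    (∑ i ∈ s, C (c i) * nodal (s.erase i) v).eval (v k)
      = c k * (nodal (s.erase k) v).eval (v k) := by
  rw [eval_finsetSum, Finset.sum_eq_single_of_mem k hk, eval_mul, eval_C]
  intro i hi hik
  rw [eval_mul, eval_nodal_at_node (Finset.mem_erase.mpr ⟨Ne.symm hik, hk⟩), mul_zero]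

theorem natDegree_sum_C_mul_nodal_erase_le [Nontrivial R] (c : ι → R) :
    (∑ i ∈ s, C (c i) * nodal (s.erase i) v).natDegree ≤ s.card := by
  refine natDegree_sum_le_of_forall_le _ _ fun i _ => (natDegree_C_mul_le _ _).trans ?_
  rw [natDegree_nodal]
  exact Finset.card_erase_le

end Lagrange

open Lagrange

section Goppa

variable (α : Fin n → F) (g : F[X]) (t t₁ : ℕ) (η : F) (e : Fin n → F)

theorem errLoc_eq_nodal : errLoc α e = nodal (errSupp e) fun i => (α i)⁻¹ := rfl

theorem errEval_eq_nodal : errEval α g t t₁ η e =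
    C (twistScalar α g t t₁ η e) * nodal (errSupp e) (fun i => (α i)⁻¹) -
      ∑ i ∈ errSupp e, C ((α i)⁻¹ * (g.eval (α i))⁻¹ * e i) *
        nodal ((errSupp e).erase i) fun j => (α j)⁻¹ := rfl

theorem natDegree_errLoc : (errLoc α e).natDegree = (errSupp e).card := natDegree_nodal

theorem natDegree_errEval_le : (errEval α g t t₁ η e).natDegree ≤ (errSupp e).card := by
  rw [errEval_eq_nodal]
  refine (natDegree_sub_le _ _).trans (max_le ?_ (natDegree_sum_C_mul_nodal_erase_le _))
  exact (natDegree_C_mul_le _ _).trans natDegree_nodal.le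

theorem X_pow_dvd_synPoly_mul_errLoc_sub_errEval (hα0 : ∀ i, α i ≠ 0) :
    X ^ t ∣ synPoly α g t t₁ η e * errLoc α e - errEval α g t t₁ η e := by
  set s := errSupp e
  set v : Fin n → F := fun i => (α i)⁻¹
  have hsplit : synPoly α g t t₁ η e * errLoc α e - errEval α g t t₁ η e
      = ∑ i ∈ s, C ((g.eval (α i))⁻¹ * e i) *
          (((X - C (v i)) * ∑ l ∈ Finset.range t, C (α i ^ l) * X ^ l + C (v i)) *
            nodal (s.erase i) v) := by
    have hterm : ∀ i ∈ s, C ((g.eval (α i))⁻¹ * e i) *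
        (((X - C (v i)) * ∑ l ∈ Finset.range t, C (α i ^ l) * X ^ l + C (v i)) *
          nodal (s.erase i) v)
        = C ((g.eval (α i))⁻¹ * e i) * (∑ l ∈ Finset.range t, C (α i ^ l) * X ^ l) *
            nodal s v + C ((α i)⁻¹ * (g.eval (α i))⁻¹ * e i) * nodal (s.erase i) v := by
      intro i hi
      rw [nodal_eq_mul_nodal_erase hi]
      simp only [v, C_mul]
      ring
    rw [Finset.sum_congr rfl hterm, Finset.sum_add_distrib, ← Finset.sum_mul, errEval_eq_nodal,
      errLoc_eq_nodal, synPoly]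
    ring
  rw [hsplit]
  exact Finset.dvd_sum fun i _ =>
    (X_pow_dvd_X_sub_C_inv_mul_geom_sum_add (hα0 i) t).mul_right _ |>.mul_left _

theorem isCoprime_errLoc_errEval (hα : Function.Injective α) (hα0 : ∀ i, α i ≠ 0)
    (hgα : ∀ i, g.eval (α i) ≠ 0) : IsCoprime (errLoc α e) (errEval α g t t₁ η e) := by
  rw [errLoc_eq_nodal]
  refine isCoprime_nodal_of_eval_ne_zero fun k hk => ?_
  rw [errEval_eq_nodal, eval_sub, eval_mul, eval_nodal_at_node (v := fun i => (α i)⁻¹) hk,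
    mul_zero, zero_sub, neg_ne_zero,
    eval_sum_C_mul_nodal_erase_at_node (v := fun i => (α i)⁻¹) _ hk]
  refine mul_ne_zero (mul_ne_zero (mul_ne_zero (inv_ne_zero (hα0 k)) (inv_ne_zero (hgα k)))
    (Finset.mem_filter.mp hk).2) (eval_nodal_not_at_node fun j hj hkj => ?_)
  exact Finset.ne_of_mem_erase hj (hα (inv_injective hkj)).symm

end Goppa

theorem stmt4_general (α : Fin n → F)
    (hα : Function.Injective α) (hα0 : ∀ i, α i ≠ 0)
    (g : F[X]) (t : ℕ)
    (hgα : ∀ i, g.eval (α i) ≠ 0) (t₁ : ℕ) (η : F)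
    (e : Fin n → F)
    (hw : 2 * (errSupp e).card ≤ t) :
    (X ^ t : F[X]) ∣ synPoly α g t t₁ η e * errLoc α e - errEval α g t t₁ η e ∧
    IsCoprime (errLoc α e) (errEval α g t t₁ η e) ∧
    (errEval α g t t₁ η e).natDegree ≤ (errLoc α e).natDegree ∧
    (errLoc α e).natDegree = (errSupp e).card ∧
    2 * (errSupp e).card ≤ t :=
  ⟨X_pow_dvd_synPoly_mul_errLoc_sub_errEval α g t t₁ η e hα0,
    isCoprime_errLoc_errEval α g t t₁ η e hα hα0 hgα,
    (natDegree_errEval_le α g t t₁ η e).trans_eq (natDegree_errLoc α e).symm,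
    natDegree_errLoc α e, hw⟩

/-- with `|J| ≤ t/2`, one has (i) `s_π σ ≡ τ (mod x^t)`;
(ii) `gcd(σ, τ) = 1`; (iii) `deg τ ≤ deg σ = |J| ≤ t/2`. -/
theorem stmt4 [Fintype F] (K : Subfield F) (α : Fin n → F)
    (hα : Function.Injective α) (hα0 : ∀ i, α i ≠ 0)
    (g : F[X]) (t : ℕ) (ht : 1 ≤ t) (hgdeg : g.natDegree = t)
    (hgα : ∀ i, g.eval (α i) ≠ 0) (t₁ : ℕ) (ht₁ : 1 ≤ t₁) (η : F)
    (e : Fin n → F) (heK : ∀ i, e i ∈ K)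
    (hw : 2 * (errSupp e).card ≤ t) :
    (X ^ t : F[X]) ∣ synPoly α g t t₁ η e * errLoc α e - errEval α g t t₁ η e ∧
    IsCoprime (errLoc α e) (errEval α g t t₁ η e) ∧
    (errEval α g t t₁ η e).natDegree ≤ (errLoc α e).natDegree ∧
    (errLoc α e).natDegree = (errSupp e).card ∧
    2 * (errSupp e).card ≤ t :=
  stmt4_general α hα hα0 g t hgα t₁ η e hw
end

section
/- Let t := deg G(x) and let σ(x), τ(x) ∈ F[x] ∖ {0} satisfy deg σ(x) ≤ ⌊t/2⌋ and deg τ(x) ≤ deg σ(x), together with: (i) σ(x) S(x) ≡ τ(x) (mod G(x)); (ii) gcd(σ(x), τ(x)) = 1; (iii) deg σ(x) + deg τ(x) < deg G(x). If σ_i(x) and τ_i(x), for i ∈ {−1, 0, …, κ+1}, are the polynomials obtained from the extended Euclidean algorithm applied to (G(x), S(x)), then there exist a unique index ν ∈ {−1, 0, …, κ+1} and a unique nonzero constant μ ∈ F such that σ(x) = μ σ_ν(x) and τ(x) = μ τ_ν(x). -/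
/-!
The cofactors of the Euclidean algorithm satisfy `σ_i S ≡ τ_i (mod G)` and
`deg σ_i + deg τ_{i-1} = deg G`. Let `ν` be the first index with `deg σ + deg τ_ν < deg G`;
minimality gives `deg σ_ν ≤ deg σ`, so both cross products `σ τ_ν` and `τ σ_ν` have degree
below `deg G`, while their difference is divisible by `G`. Hence `σ τ_ν = τ σ_ν`, and since
`σ` and `τ` are coprime, `σ_ν` is a constant multiple of `σ`. Uniqueness holds because the
degrees of the `τ_i` strictly decrease.
-/

open Polynomial

/-- Data produced by the extended Euclidean algorithm applied to polynomials
`G` and `S` over a field, with `G ≠ 0` and `deg S < deg G`.  Indices are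
shifted by one relative to the paper: `T k`, `U k`, `V k`, `Q k` correspond to
`τ_{k-1}`, `u_{k-1}`, `σ_{k-1}`, `q_{k-1}` respectively, so `T 0 = τ_{-1} = G`,
`T 1 = τ_0 = S`, etc.  `κ` is the largest (paper) index with `τ_κ ≠ 0`, i.e.
`T (κ+1) ≠ 0` and `T (κ+2) = 0`. -/
structure EEAData (F : Type*) [Field F] (G S : Polynomial F) where
  T : ℕ → Polynomial F
  U : ℕ → Polynomial F
  V : ℕ → Polynomial F
  Q : ℕ → Polynomial F
  κ : ℕ
  hT0 : T 0 = G
  hT1 : T 1 = S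
  hU0 : U 0 = 1
  hU1 : U 1 = 0
  hV0 : V 0 = 0
  hV1 : V 1 = 1
  hrec : ∀ k : ℕ, 2 ≤ k → k ≤ κ + 2 →
    T (k - 2) = Q k * T (k - 1) + T k ∧
    (T k).degree < (T (k - 1)).degree ∧
    U k = U (k - 2) - Q k * U (k - 1) ∧
    V k = V (k - 2) - Q k * V (k - 1)
  hκ₁ : T (κ + 1) ≠ 0
  hκ₂ : T (κ + 2) = 0

section DegreeLemmas

variable {R : Type*} [CommRing R] [IsDomain R]

theorem Polynomial.natDegree_add_eq_of_eq_mul_add {a b q r : R[X]} (h : a = q * b + r)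
    (hr : r.degree < b.degree) (hb : b.degree < a.degree) :
    q.natDegree + b.natDegree = a.natDegree := by
  have hb0 : b ≠ 0 := ne_zero_of_degree_gt hr
  have hq0 : q ≠ 0 := by
    rintro rfl
    rw [zero_mul, zero_add] at h
    exact lt_asymm hr (h ▸ hb)
  have hqb : (q * b).degree = a.degree := by
    rw [h, mul_comm q b, degree_add_eq_left_of_degree_lt (hr.trans_le (degree_le_mul_left b hq0))]
  rw [← natDegree_eq_of_degree_eq hqb, natDegree_mul hq0 hb0]

theorem Polynomial.mul_eq_mul_of_dvd_of_degree_lt {G S σ τ σ' τ' : R[X]}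
    (h : G ∣ σ * S - τ) (h' : G ∣ σ' * S - τ')
    (hστ' : (σ * τ').degree < G.degree) (hτσ' : (τ * σ').degree < G.degree) :
    σ * τ' = τ * σ' := by
  have hdvd : G ∣ σ * τ' - τ * σ' := by
    have : σ * τ' - τ * σ' = σ' * (σ * S - τ) - σ * (σ' * S - τ') := by ring
    exact this ▸ dvd_sub (h.mul_left _) (h'.mul_left _)
  refine sub_eq_zero.mp (eq_zero_of_dvd_of_degree_lt hdvd ?_)
  exact (degree_sub_le _ _).trans_lt (max_lt hστ' hτσ')

end DegreeLemmas

theorem Polynomial.exists_C_mul_of_isCoprime {F : Type*} [Field F] {σ τ σ' τ' : F[X]}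
    (hcop : IsCoprime σ τ) (h : σ * τ' = τ * σ') (hσ' : σ' ≠ 0)
    (hdeg : σ'.natDegree ≤ σ.natDegree) :
    ∃ c : F, σ' = C c * σ ∧ τ' = C c * τ := by
  have hσ : σ ≠ 0 := by
    rintro rfl
    have hτ : τ ≠ 0 := (isCoprime_zero_left.mp hcop).ne_zero
    exact hσ' ((mul_eq_zero.mp (h.symm.trans (zero_mul _))).resolve_left hτ)
  obtain ⟨u, hu⟩ := associated_of_dvd_of_natDegree_le
    (hcop.dvd_of_dvd_mul_left ⟨τ', h.symm⟩) hσ' hdeg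
  obtain ⟨c, -, hc⟩ := Polynomial.isUnit_iff.mp u.isUnit
  refine ⟨c, by rw [← hu, ← hc, mul_comm], mul_left_cancel₀ hσ ?_⟩
  rw [h, ← hu, ← hc]
  ring

namespace EEAData

variable {F : Type*} [Field F] {G S : F[X]} (E : EEAData F G S)

theorem hrec_add_two {j : ℕ} (hj : j ≤ E.κ) :
    E.T j = E.Q (j + 2) * E.T (j + 1) + E.T (j + 2) ∧
      (E.T (j + 2)).degree < (E.T (j + 1)).degree ∧
      E.V (j + 2) = E.V j - E.Q (j + 2) * E.V (j + 1) := by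
  obtain ⟨hT, hdeg, -, hV⟩ := E.hrec (j + 2) (by omega) (by omega)
  exact ⟨hT, hdeg, hV⟩

theorem degree_T_succ_lt (hS : S.degree < G.degree) {j : ℕ} (hj : j ≤ E.κ + 1) :
    (E.T (j + 1)).degree < (E.T j).degree := by
  cases j with
  | zero => simpa [E.hT0, E.hT1] using hS
  | succ i => exact (E.hrec_add_two (by omega)).2.1

theorem strictAntiOn_degree_T (hS : S.degree < G.degree) :
    StrictAntiOn (fun k => (E.T k).degree) (Set.Iic (E.κ + 2)) :=
  strictAntiOn_Iic_of_succ_lt fun _ hm => E.degree_T_succ_lt hS (by omega)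

theorem T_ne_zero (hS : S.degree < G.degree) {j : ℕ} (hj : j ≤ E.κ + 1) : E.T j ≠ 0 :=
  ne_zero_of_degree_gt (E.degree_T_succ_lt hS hj)

theorem degree_V_lt_and_natDegree_add (hS : S.degree < G.degree) {j : ℕ} (hj : j ≤ E.κ + 1) :
    (E.V j).degree < (E.V (j + 1)).degree ∧
      (E.V (j + 1)).natDegree + (E.T j).natDegree = G.natDegree := by
  induction j with
  | zero => simp [E.hV0, E.hV1, E.hT0]
  | succ j ih =>
    show (E.V (j + 1)).degree < (E.V (j + 2)).degree ∧
      (E.V (j + 2)).natDegree + (E.T (j + 1)).natDegree = G.natDegree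
    obtain ⟨hVlt, hVdeg⟩ := ih (by omega)
    obtain ⟨hT, hTdeg, hV⟩ := E.hrec_add_two (j := j) (by omega)
    have hTj : E.T (j + 1) ≠ 0 := E.T_ne_zero hS hj
    have hQdeg := natDegree_add_eq_of_eq_mul_add hT hTdeg (E.degree_T_succ_lt hS (by omega))
    have hTlt := natDegree_lt_natDegree hTj (E.degree_T_succ_lt hS (by omega))
    have hQ : E.Q (j + 2) ≠ 0 := ne_zero_of_natDegree_gt (n := 0) (by omega)
    have hQV := natDegree_mul hQ (ne_zero_of_degree_gt hVlt)
    have hlt : (E.V (j + 1)).degree < (E.Q (j + 2) * E.V (j + 1)).degree :=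
      degree_lt_degree (by omega)
    have hdeg : (E.V (j + 2)).degree = (E.Q (j + 2) * E.V (j + 1)).degree := by
      rw [hV, degree_sub_eq_right_of_degree_lt (hVlt.trans hlt)]
    have := natDegree_eq_of_degree_eq hdeg
    exact ⟨hdeg ▸ hlt, by omega⟩

theorem dvd_V_mul_sub_T {k : ℕ} (hk : k ≤ E.κ + 2) : G ∣ E.V k * S - E.T k := by
  induction k using Nat.twoStepInduction with
  | zero => simp [E.hT0, E.hV0]
  | one => simp [E.hT1, E.hV1]
  | more j ih₀ ih₁ =>
    obtain ⟨hT, -, hV⟩ := E.hrec_add_two (j := j) (by omega)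
    have : E.V (j + 2) * S - E.T (j + 2) =
        (E.V j * S - E.T j) - E.Q (j + 2) * (E.V (j + 1) * S - E.T (j + 1)) := by
      rw [hV, eq_sub_of_add_eq' hT.symm]
      ring
    exact this ▸ dvd_sub (ih₀ (by omega)) ((ih₁ (by omega)).mul_left _)

theorem exists_degree_add_lt_le (hS : S.degree < G.degree) {σ : F[X]} (hσ : σ ≠ 0) :
    ∃ j ≤ E.κ + 1, σ.degree + (E.T (j + 1)).degree < G.degree ∧
      G.degree ≤ σ.degree + (E.T j).degree := by
  classical
  have hG : G ≠ 0 := E.hT0 ▸ E.T_ne_zero hS (Nat.zero_le _)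
  have hex : ∃ j, σ.degree + (E.T (j + 1)).degree < G.degree :=
    ⟨E.κ + 1, by simp [E.hκ₂, bot_lt_iff_ne_bot, hG]⟩
  refine ⟨Nat.find hex, ?_, Nat.find_spec hex, ?_⟩
  · exact Nat.find_min' hex (by simp [E.hκ₂, bot_lt_iff_ne_bot, hG])
  · rcases h : Nat.find hex with _ | i
    · simpa [E.hT0] using le_add_of_nonneg_left (zero_le_degree_iff.mpr hσ)
    · exact not_lt.mp (Nat.find_min hex (h ▸ Nat.lt_succ_self i))

end EEAData

theorem stmt9_general {F : Type*} [Field F] (G S : Polynomial F)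
    (hS : S.degree < G.degree) (E : EEAData F G S)
    (σ τ : Polynomial F) (hσ : σ ≠ 0)
    (hkey : G ∣ σ * S - τ)
    (hcop : IsCoprime σ τ)
    (hsum : σ.natDegree + τ.natDegree < G.natDegree) :
    ∃! νμ : ℕ × F, νμ.1 ≤ E.κ + 2 ∧ νμ.2 ≠ 0 ∧
      σ = Polynomial.C νμ.2 * E.V νμ.1 ∧ τ = Polynomial.C νμ.2 * E.T νμ.1 := by
  obtain ⟨j, hj, hlt, hle⟩ := E.exists_degree_add_lt_le hS hσ
  obtain ⟨hVlt, hVdeg⟩ := E.degree_V_lt_and_natDegree_add hS hj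
  have hV : E.V (j + 1) ≠ 0 := ne_zero_of_degree_gt hVlt
  have hVσ : (E.V (j + 1)).natDegree ≤ σ.natDegree := by
    rw [← degree_mul] at hle
    have := (natDegree_le_natDegree hle).trans natDegree_mul_le
    omega
  have hτV : (τ * E.V (j + 1)).degree < G.degree :=
    degree_lt_degree (natDegree_mul_le.trans_lt (by omega))
  have hcross := mul_eq_mul_of_dvd_of_degree_lt hkey (E.dvd_V_mul_sub_T (k := j + 1) (by omega))
    (by rwa [degree_mul]) hτV
  obtain ⟨c, hVc, hTc⟩ := exists_C_mul_of_isCoprime hcop hcross hV hVσ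
  have hc : c ≠ 0 := by
    rintro rfl
    exact hV (by simpa using hVc)
  refine ⟨(j + 1, c⁻¹), ⟨by omega, inv_ne_zero hc, ?_, ?_⟩, ?_⟩
  · simp [hVc, ← mul_assoc, ← C_mul, hc]
  · simp [hTc, ← mul_assoc, ← C_mul, hc]
  rintro ⟨ν, μ⟩ ⟨hν, hμ, hσν, hτν⟩
  have hνj : ν = j + 1 := (E.strictAntiOn_degree_T hS).injOn hν (Set.mem_Iic.mpr (by omega)) <| by
    simp only [hTc, degree_C_mul hc, hτν, degree_C_mul hμ]
  subst hνj
  have : C μ * E.V (j + 1) = C c⁻¹ * E.V (j + 1) := by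
    rw [← hσν, hVc, ← mul_assoc, ← C_mul, inv_mul_cancel₀ hc, C_1, one_mul]
  simp [C_injective (mul_right_cancel₀ hV this)]

/-- uniqueness of the key-equation solution among EEA outputs.
If `σ, τ ≠ 0` with `deg σ ≤ ⌊t/2⌋` (`t = deg G`), `deg τ ≤ deg σ`,
`σ S ≡ τ (mod G)`, `gcd(σ, τ) = 1` and `deg σ + deg τ < deg G`, then there is a
unique (shifted) index `ν ∈ {0, …, κ + 2}` (paper index in `{-1, …, κ + 1}`)
and a unique nonzero `μ ∈ F` with `σ = μ σ_ν` and `τ = μ τ_ν`. -/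
theorem stmt9 {F : Type*} [Field F] (G S : Polynomial F)
    (hG : G ≠ 0) (hS : S.degree < G.degree) (E : EEAData F G S)
    (σ τ : Polynomial F) (hσ : σ ≠ 0) (hτ : τ ≠ 0)
    (hσdeg : σ.natDegree ≤ G.natDegree / 2)
    (hτσ : τ.natDegree ≤ σ.natDegree)
    (hkey : G ∣ σ * S - τ)
    (hcop : IsCoprime σ τ)
    (hsum : σ.natDegree + τ.natDegree < G.natDegree) :
    ∃! νμ : ℕ × F, νμ.1 ≤ E.κ + 2 ∧ νμ.2 ≠ 0 ∧
      σ = Polynomial.C νμ.2 * E.V νμ.1 ∧ τ = Polynomial.C νμ.2 * E.T νμ.1 :=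
  stmt9_general G S hS E σ τ hσ hkey hcop hsum
end

section
/- Let a, b ∈ 𝔽_{q^m} with a ≠ 0 and a² = 1, and suppose L is σ_{a,b}-invariant, i.e., {a α + b : α ∈ L} = L, with induced permutation σ of {1, …, n} given by α_{σ(i)} = a α_i + b. Then for every c = (c_1, …, c_n) ∈ 𝔽_q^n, c ∈ Γ(L, g(x), 1, t−2, η) if and only if (c_{σ(1)}, …, c_{σ(n)}) ∈ Γ(L, ĝ(x), 1, t−2, η), where ĝ(x) := g(a x + b); in particular, c ↦ (c_{σ(1)}, …, c_{σ(n)}) is a bijection from Γ(L, g(x), 1, t−2, η) onto Γ(L, g(ax+b), 1, t−2, η). -/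
open Polynomial

/-- The twisted Goppa code `Γ(L, g, 1, t-2, η)` (single twist, twist order
`t₁ = 1`, hook `h = t - 2`), given by its parity-check equations:
`Σ_i c_i α_i^l g(α_i)⁻¹ = 0` for every `l < t` with `l ≠ t - 2`, and
`Σ_i c_i (α_i^{t-2} + η α_i^t) g(α_i)⁻¹ = 0`. -/
def TGoppaQC {F : Type*} [Field F] (K : Subfield F) {n : ℕ} (α : Fin n → F)
    (g : F[X]) (t : ℕ) (η : F) : Set (Fin n → F) :=
  {c | (∀ i, c i ∈ K) ∧
    (∀ l : ℕ, l < t → l ≠ t - 2 → ∑ i, c i * α i ^ l / g.eval (α i) = 0) ∧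
    ∑ i, c i * ((α i ^ (t - 2) + η * α i ^ t) / g.eval (α i)) = 0}

/-!
With weights `w_i = c_i / g(α_i)`, reindexing by `σ` turns the parity checks of `c ∘ σ` for
`g(ax+b)` into the checks of `w` with locators `a⁻¹(α_i - b) = a α_i - ab`, so it suffices that
the checks are invariant under the affine substitution `β ↦ u β + v` whenever `u^2 = 1`.
Expanding `(u β + v)^l` binomially, each check `l ≠ t - 2` becomes a combination of checks
`k ≤ l`, the monomial `β^{t-2}` appearing only for `l = t - 1 = p^s` with coefficient
`binom(p^s, p^s - 1) = p^s = 0`. In the hook check, `(u β + v)^{t-2}` contributes only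
`u^{t-2} β^{t-2}`, and by Frobenius `(u β + v)^t = (u^{p^s} β^{p^s} + v^{p^s}) (u β + v)`
contributes `u^t β^t` plus monomials of degree `p^s, 1, 0`, which are killed by ordinary checks
as soon as `p^s ≥ 3`. Since `u^2 = 1` gives `u^t = u^{t-2}`, the hook check is rescaled by
`u^{t-2}`.
-/

open Finset

section TwistedChecks

variable {R : Type*} [CommRing R] {ι : Type*} [Fintype ι]

def SatisfiesTwistedChecks (t : ℕ) (η : R) (w β : ι → R) : Prop :=
  (∀ l < t, l ≠ t - 2 → ∑ i, w i * β i ^ l = 0) ∧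
    ∑ i, w i * (β i ^ (t - 2) + η * β i ^ t) = 0

theorem satisfiesTwistedChecks_comp_equiv {κ : Type*} [Fintype κ] (e : κ ≃ ι) {t : ℕ} {η : R}
    {w β : ι → R} :
    SatisfiesTwistedChecks t η (w ∘ e) (β ∘ e) ↔ SatisfiesTwistedChecks t η w β :=
  and_congr
    (forall_congr' fun l => by
      simp only [Function.comp_apply, e.sum_comp (fun i => w i * β i ^ l)])
    (by simp only [Function.comp_apply, e.sum_comp (fun i => w i * (β i ^ (t - 2) + η * β i ^ t))])

theorem sum_mul_affine_pow (w β : ι → R) (u v : R) (l : ℕ) :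
    ∑ i, w i * (u * β i + v) ^ l =
      ∑ k ∈ range (l + 1), (l.choose k * (u ^ k * v ^ (l - k))) * ∑ i, w i * β i ^ k := by
  simp only [add_pow, mul_sum]
  rw [sum_comm]
  refine sum_congr rfl fun k _ => sum_congr rfl fun i _ => ?_
  ring

theorem sum_mul_affine_pow_succ_char_pow {p : ℕ} [Fact p.Prime] [CharP R p] (s : ℕ)
    (w β : ι → R) (u v : R) :
    ∑ i, w i * (u * β i + v) ^ (p ^ s + 1) =
      u ^ (p ^ s + 1) * ∑ i, w i * β i ^ (p ^ s + 1) + u ^ p ^ s * v * ∑ i, w i * β i ^ p ^ s +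
        u * v ^ p ^ s * ∑ i, w i * β i ^ 1 + v ^ (p ^ s + 1) * ∑ i, w i * β i ^ 0 := by
  simp only [mul_sum, ← sum_add_distrib]
  refine sum_congr rfl fun i _ => ?_
  rw [pow_succ, add_pow_char_pow, mul_pow]
  ring

variable {p : ℕ} [Fact p.Prime] [CharP R p] {s t : ℕ} {η : R} {w β : ι → R}

theorem choose_prime_pow_pred_cast_eq_zero (hs : s ≠ 0) :
    ((p ^ s).choose (p ^ s - 1) : R) = 0 := by
  rw [Nat.choose_symm (Nat.one_le_pow _ _ (Fact.out : p.Prime).pos), Nat.choose_one_right,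
    Nat.cast_pow, CharP.cast_eq_zero, zero_pow hs]

theorem sum_mul_affine_pow_eq_zero (hq : 3 ≤ p ^ s) (ht : t = p ^ s + 1)
    (h : ∀ l < t, l ≠ t - 2 → ∑ i, w i * β i ^ l = 0) (u v : R) {l : ℕ} (hl : l < t)
    (hl₂ : l ≠ t - 2) : ∑ i, w i * (u * β i + v) ^ l = 0 := by
  rw [sum_mul_affine_pow]
  refine sum_eq_zero fun k hk => ?_
  rw [mem_range] at hk
  rcases eq_or_ne k (t - 2) with rfl | hk₂
  · obtain rfl : l = p ^ s := by omega
    rw [show t - 2 = p ^ s - 1 by omega,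
      choose_prime_pow_pred_cast_eq_zero (by rintro rfl; simp at hq), zero_mul, zero_mul]
  · rw [h k (by omega) hk₂, mul_zero]

theorem sum_mul_affine_pow_hook (ht : 2 ≤ t) (h : ∀ l < t, l ≠ t - 2 → ∑ i, w i * β i ^ l = 0)
    (u v : R) : ∑ i, w i * (u * β i + v) ^ (t - 2) = u ^ (t - 2) * ∑ i, w i * β i ^ (t - 2) := by
  rw [sum_mul_affine_pow, sum_range_succ, sum_eq_zero fun k hk => ?_]
  · simp
  · rw [mem_range] at hk
    rw [h k (by omega) (by omega), mul_zero]

theorem SatisfiesTwistedChecks.affine (hq : 3 ≤ p ^ s) (ht : t = p ^ s + 1)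
    (h : SatisfiesTwistedChecks t η w β) {u : R} (hu : u ^ 2 = 1) (v : R) :
    SatisfiesTwistedChecks t η w (fun i => u * β i + v) := by
  obtain ⟨hpow, hhook⟩ := h
  refine ⟨fun l hl hl₂ => sum_mul_affine_pow_eq_zero hq ht hpow u v hl hl₂, ?_⟩
  have hut : u ^ t = u ^ (t - 2) := by
    rw [show t = t - 2 + 2 by omega, pow_add, hu, mul_one, Nat.add_sub_cancel]
  simp only [mul_add, sum_add_distrib, mul_left_comm _ η, ← mul_sum] at hhook ⊢
  rw [sum_mul_affine_pow_hook (by omega) hpow, ht, sum_mul_affine_pow_succ_char_pow,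
    ← ht, hut, hpow (p ^ s) (by omega) (by omega), hpow 1 (by omega) (by omega),
    hpow 0 (by omega) (by omega)]
  linear_combination u ^ (t - 2) * hhook

theorem satisfiesTwistedChecks_iff_of_affine (hq : 3 ≤ p ^ s) (ht : t = p ^ s + 1)
    {β' : ι → R} {u v : R} (hu : u ^ 2 = 1) (hβ : ∀ i, β' i = u * β i + v) :
    SatisfiesTwistedChecks t η w β' ↔ SatisfiesTwistedChecks t η w β := by
  obtain rfl : β' = fun i => u * β i + v := funext hβ
  refine ⟨fun h => ?_, fun h => h.affine hq ht hu v⟩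
  convert h.affine hq ht hu (-(u * v)) using 2 with i
  linear_combination (-β i) * hu

end TwistedChecks

theorem mem_TGoppaQC_iff {F : Type*} [Field F] (K : Subfield F) {n : ℕ} (α : Fin n → F)
    (g : F[X]) (t : ℕ) (η : F) (c : Fin n → F) :
    c ∈ TGoppaQC K α g t η ↔
      (∀ i, c i ∈ K) ∧ SatisfiesTwistedChecks t η (fun i => c i / g.eval (α i)) α := by
  simp only [TGoppaQC, SatisfiesTwistedChecks, Set.mem_ofPred_eq, div_mul_eq_mul_div,
    mul_div_assoc]

theorem stmt12_general {p : ℕ} (hp : p.Prime) (hodd : Odd p)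
    {F : Type*} [Field F] [CharP F p] (K : Subfield F)
    {n : ℕ} (α : Fin n → F)
    (s : ℕ) (hs : 1 ≤ s) (t : ℕ) (htdef : t = 1 + p ^ s)
    (g : F[X]) (η : F)
    (a b : F) (ha : a ^ 2 = 1)
    (σ : Equiv.Perm (Fin n)) (hσ : ∀ i, α (σ i) = a * α i + b)
    (c : Fin n → F) :
    c ∈ TGoppaQC K α g t η ↔
      (fun i => c (σ i)) ∈ TGoppaQC K α (g.comp (C a * X + C b)) t η := by
  have := Fact.mk hp
  have hq : 3 ≤ p ^ s := by
    obtain ⟨k, hk⟩ := hodd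
    have := hp.two_le
    have := Nat.le_self_pow (by omega : s ≠ 0) p
    omega
  set w : Fin n → F := fun j => c j / g.eval (α j)
  set β : Fin n → F := fun j => a * α j - a * b
  have hweights : (fun i => c (σ i) / (g.comp (C a * X + C b)).eval (α i)) = w ∘ σ := by
    ext i; simp [w, eval_comp, hσ]
  have hlocators : β ∘ σ = α := by
    ext i; simp only [β, Function.comp_apply, hσ]; linear_combination α i * ha
  rw [mem_TGoppaQC_iff, mem_TGoppaQC_iff, hweights]
  refine and_congr σ.forall_congr_right.symm ?_
  calc SatisfiesTwistedChecks t η w α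
      ↔ SatisfiesTwistedChecks t η w β :=
        satisfiesTwistedChecks_iff_of_affine hq (by omega) ha fun j => by
          linear_combination (b - α j) * ha
    _ ↔ SatisfiesTwistedChecks t η (w ∘ σ) (β ∘ σ) := (satisfiesTwistedChecks_comp_equiv σ).symm
    _ ↔ SatisfiesTwistedChecks t η (w ∘ σ) α := by rw [hlocators]

/-- for `a² = 1`, `a ≠ 0`, an `σ_{a,b}`-invariant support `L`
with induced permutation `σ` (i.e. `α_{σ(i)} = a α_i + b`), the map
`c ↦ (c_{σ(1)}, …, c_{σ(n)})` is a bijection from `Γ(L, g(x), 1, t-2, η)` onto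
`Γ(L, g(ax+b), 1, t-2, η)`: `c` is a codeword of the former iff `c ∘ σ` is a
codeword of the latter. -/
theorem stmt12 {p : ℕ} (hp : p.Prime) (hodd : Odd p)
    {F : Type*} [Field F] [Fintype F] [CharP F p] (K : Subfield F)
    {n : ℕ} (α : Fin n → F) (hα : Function.Injective α)
    (s : ℕ) (hs : 1 ≤ s) (t : ℕ) (htdef : t = 1 + p ^ s)
    (g : F[X]) (hgdeg : g.degree = (t : ℕ))
    (hgα : ∀ i, g.eval (α i) ≠ 0) (η : F)
    (a b : F) (ha0 : a ≠ 0) (ha : a ^ 2 = 1)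
    (σ : Equiv.Perm (Fin n)) (hσ : ∀ i, α (σ i) = a * α i + b)
    (c : Fin n → F) :
    c ∈ TGoppaQC K α g t η ↔
      (fun i => c (σ i)) ∈ TGoppaQC K α (g.comp (C a * X + C b)) t η :=
  stmt12_general hp hodd K α s hs t htdef g η a b ha σ hσ c
end

section
/- Let F be a field of odd characteristic, let b ∈ F, and let g(x) ∈ F[x]. Then g(b − x) = g(x) (as polynomials, i.e., g composed with x ↦ b − x equals g) if and only if there exists a polynomial f(x) ∈ F[x] such that g(x) = f((x − b/2)²). -/
/-!
Translating by `c = b/2` (Taylor shift `g ↦ g(X + c)`) turns the reflection `x ↦ b - x` into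
`x ↦ -x`. A polynomial fixed by `x ↦ -x` has vanishing odd coefficients once `2` is not a zero
divisor, so it is `f(X²)` with `f` its contraction; translating back gives `f((X - c)²)`.
-/

open Polynomial

namespace Polynomial

variable {R : Type*} [CommRing R]

lemma coeff_comp_neg_X (p : R[X]) (n : ℕ) : (p.comp (-X)).coeff n = (-1) ^ n * p.coeff n := by
  rw [← neg_one_mul (X : R[X]), ← C_1, ← C_neg, comp_C_mul_X_coeff, mul_comm]

lemma coeff_eq_zero_of_comp_neg_X_eq_self [NoZeroDivisors R] (h2 : (2 : R) ≠ 0) {p : R[X]}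
    (hp : p.comp (-X) = p) {n : ℕ} (hn : Odd n) : p.coeff n = 0 := by
  have h := coeff_comp_neg_X p n
  rw [hp, hn.neg_one_pow, neg_one_mul, eq_neg_iff_add_eq_zero, ← two_mul] at h
  exact (mul_eq_zero.1 h).resolve_left h2

lemma comp_neg_X_eq_self_iff [NoZeroDivisors R] (h2 : (2 : R) ≠ 0) {p : R[X]} :
    p.comp (-X) = p ↔ ∃ f : R[X], p = f.comp (X ^ 2) := by
  constructor
  · intro hp
    refine ⟨contract 2 p, ?_⟩
    ext n
    rw [← expand_eq_comp_X_pow, coeff_expand two_pos, coeff_contract two_ne_zero]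
    split_ifs with hn
    · rw [Nat.div_mul_cancel hn]
    · exact coeff_eq_zero_of_comp_neg_X_eq_self h2 hp
        (Nat.not_even_iff_odd.1 (even_iff_two_dvd.not.2 hn))
  · rintro ⟨f, rfl⟩
    rw [comp_assoc, pow_comp, X_comp, neg_sq]

lemma taylor_comp_C_sub_X (c : R) (g : R[X]) :
    taylor c (g.comp (C (2 * c) - X)) = (taylor c g).comp (-X) := by
  rw [taylor_apply, taylor_apply, comp_assoc, comp_assoc]
  congr 1
  simp only [sub_comp, add_comp, C_comp, X_comp]
  rw [C_mul, map_ofNat]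
  ring

lemma taylor_eq_comp_X_sq_iff (c : R) (f g : R[X]) :
    taylor c g = f.comp (X ^ 2) ↔ g = f.comp ((X - C c) ^ 2) := by
  have hf : taylor c (f.comp ((X - C c) ^ 2)) = f.comp (X ^ 2) := by
    rw [taylor_apply, comp_assoc, pow_comp, sub_comp, X_comp, C_comp, add_sub_cancel_right]
  rw [← hf, (taylor_injective c).eq_iff]

theorem comp_C_sub_X_eq_self_iff [NoZeroDivisors R] (h2 : (2 : R) ≠ 0) (c : R) (g : R[X]) :
    g.comp (C (2 * c) - X) = g ↔ ∃ f : R[X], g = f.comp ((X - C c) ^ 2) := by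
  rw [← (taylor_injective c).eq_iff, taylor_comp_C_sub_X, comp_neg_X_eq_self_iff h2]
  simp_rw [taylor_eq_comp_X_sq_iff]

end Polynomial

theorem stmt16_general {F : Type*} [Field F] {p : ℕ} (hodd : Odd p)
    [CharP F p] (b : F) (g : F[X]) :
    g.comp (C b - X) = g ↔ ∃ f : F[X], g = f.comp ((X - C (b / 2)) ^ 2) := by
  have h2 : (2 : F) ≠ 0 := Ring.two_ne_zero <| by
    rw [ringChar.eq F p]
    rintro rfl
    exact Nat.not_even_iff_odd.2 hodd even_two
  rw [← comp_C_sub_X_eq_self_iff h2, mul_div_cancel₀ b h2]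

/-- over a field of odd prime characteristic, a polynomial `g`
satisfies `g(b - x) = g(x)` iff `g(x) = f((x - b/2)²)` for some polynomial `f`. -/
theorem stmt16 {F : Type*} [Field F] {p : ℕ} (hp : p.Prime) (hodd : Odd p)
    [CharP F p] (b : F) (g : F[X]) :
    g.comp (C b - X) = g ↔ ∃ f : F[X], g = f.comp ((X - C (b / 2)) ^ 2) :=
  stmt16_general hodd b g
end
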